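/- Let R be a ring such that the classes of n-exact and (n+1)-exact short exact sequences of R-modules coincide. Then every module admitting a finite resolution 0 → P_{n+1} → ⋯ → P_0 → M → 0 by finitely generated projectives has projective dimension at most n. -/

import Mathlib

universe u

open CategoryTheory

variable (R : Type u) [Ring R]

/-- Resolutions `0 → P_n → ⋯ → P_0 → M → 0` of length `≤ n` by modules satisfying `pred`. -/
def ResBy (pred : ∀ (M : Type u) [AddCommGroup M] [Module R M], Prop) :
    ℕ → ∀ (M : Type u) [AddCommGroup M] [Module R M], Prop
  | 0, M, _, _ => pred M
  | (n+1), M, _, _ => ∃ (P : Type u) (_ : AddCommGroup P) (_ : Module R P)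
      (f : P →ₗ[R] M), pred P ∧ Function.Surjective f ∧
        ResBy pred n (LinearMap.ker f)

/-- `M` admits an exact sequence `0 → P_n → ⋯ → P_0 → M → 0`
with all `P_i` finitely generated projective, i.e. `M ∈ 𝒫^{<n+1}`. -/
def FPRes (n : ℕ) (M : Type u) [AddCommGroup M] [Module R M] : Prop :=
  ResBy R (fun P _ _ => Module.Finite R P ∧ Module.Projective R P) n M

/-- `M` has projective dimension at most `n`. -/
def pdLE (n : ℕ) (M : Type u) [AddCommGroup M] [Module R M] : Prop :=
  ResBy R (fun P _ _ => Module.Projective R P) n M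

/-- Coresolutions `0 → M → I^0 → ⋯ → I^n → 0` of length `≤ n` by modules satisfying `pred`. -/
def CoresBy (pred : ∀ (M : Type u) [AddCommGroup M] [Module R M], Prop) :
    ℕ → ∀ (M : Type u) [AddCommGroup M] [Module R M], Prop
  | 0, M, _, _ => pred M
  | (n+1), M, _, _ => ∃ (I : Type u) (_ : AddCommGroup I) (_ : Module R I)
      (f : M →ₗ[R] I), pred I ∧ Function.Injective f ∧
        CoresBy pred n (I ⧸ LinearMap.range f)

/-- `M` has injective dimension at most `n`. -/
def idLE (n : ℕ) (M : Type u) [AddCommGroup M] [Module R M] : Prop :=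
  CoresBy R (fun I _ _ => Module.Injective R I) n M

/-- The projective dimension of `M`, as an element of `ℕ∞`. -/
noncomputable def pdim (M : Type u) [AddCommGroup M] [Module R M] : ℕ∞ :=
  sInf ((↑) '' {n : ℕ | pdLE R n M})

/-- The injective dimension of `M`, as an element of `ℕ∞`. -/
noncomputable def idim (M : Type u) [AddCommGroup M] [Module R M] : ℕ∞ :=
  sInf ((↑) '' {n : ℕ | idLE R n M})

/-- A short exact sequence `0 → A → B → C → 0` (given by `f`, `g`) is `n`-exact if
`Hom_R(M, -)` keeps it exact for every `M ∈ 𝒫^{<n+1}`. -/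
def NExactSES (n : ℕ) {A B C : Type u} [AddCommGroup A] [Module R A]
    [AddCommGroup B] [Module R B] [AddCommGroup C] [Module R C]
    (f : A →ₗ[R] B) (g : B →ₗ[R] C) : Prop :=
  ∀ (M : Type u) [AddCommGroup M] [Module R M], FPRes R n M →
    Function.Injective (fun h : M →ₗ[R] A => f.comp h) ∧
    Function.Exact (fun h : M →ₗ[R] A => f.comp h) (fun h : M →ₗ[R] B => g.comp h) ∧
    Function.Surjective (fun h : M →ₗ[R] B => g.comp h)

/-- `Q` is `n`-projective if `Hom_R(Q, -)` keeps every `n`-exact short exact sequence exact. -/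
def NProj (n : ℕ) (Q : Type u) [AddCommGroup Q] [Module R Q] : Prop :=
  ∀ (A B C : Type u) [AddCommGroup A] [Module R A] [AddCommGroup B] [Module R B]
    [AddCommGroup C] [Module R C] (f : A →ₗ[R] B) (g : B →ₗ[R] C),
    Function.Injective f → Function.Surjective g → Function.Exact f g →
    NExactSES R n f g →
    Function.Injective (fun h : Q →ₗ[R] A => f.comp h) ∧
    Function.Exact (fun h : Q →ₗ[R] A => f.comp h) (fun h : Q →ₗ[R] B => g.comp h) ∧
    Function.Surjective (fun h : Q →ₗ[R] B => g.comp h)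

/-- `Ext^k_R(M, N)` as an abelian group (computed in `ModuleCat R`). -/
noncomputable def ExtGrp (k : ℕ) (M N : Type u) [AddCommGroup M] [Module R M]
    [AddCommGroup N] [Module R N] : Type u :=
  ((Ext ℤ (ModuleCat.{u} R) k).obj (Opposite.op (ModuleCat.of R M))).obj (ModuleCat.of R N)

/-!
Summing all maps into `M` out of (representatives of) modules in `𝒫^{<n+1}` gives `g : T → M`
with `pd T ≤ n` through which every such map factors, i.e. `0 → ker g → T → M → 0` is `n`-exact.
By hypothesis it is then `(n+1)`-exact, so for `M ∈ 𝒫^{<n+2}` the identity of `M` lifts along `g`: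
`M` is a retract of `T`, hence `pd M ≤ n`.
-/

variable {R}

section Resolutions

variable {pred : ∀ (M : Type u) [AddCommGroup M] [Module R M], Prop}

theorem resBy_mono {pred' : ∀ (M : Type u) [AddCommGroup M] [Module R M], Prop}
    (h : ∀ (M : Type u) [AddCommGroup M] [Module R M], pred M → pred' M) {n : ℕ}
    {M : Type u} [AddCommGroup M] [Module R M] (hM : ResBy R pred n M) : ResBy R pred' n M := by
  induction n generalizing M with
  | zero => exact h M hM
  | succ n ih =>
    obtain ⟨P, _, _, f, hP, hf, hK⟩ := hM
    exact ⟨P, _, _, f, h P hP, hf, ih hK⟩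

theorem resBy_of_linearEquiv
    (hpred : ∀ (M N : Type u) [AddCommGroup M] [Module R M] [AddCommGroup N] [Module R N],
      (M ≃ₗ[R] N) → pred M → pred N) {n : ℕ}
    {M N : Type u} [AddCommGroup M] [Module R M] [AddCommGroup N] [Module R N]
    (e : M ≃ₗ[R] N) (hM : ResBy R pred n M) : ResBy R pred n N := by
  cases n with
  | zero => exact hpred M N e hM
  | succ n =>
    obtain ⟨P, _, _, f, hP, hf, hK⟩ := hM
    refine ⟨P, _, _, e.toLinearMap ∘ₗ f, hP, e.surjective.comp hf, ?_⟩
    rwa [LinearEquiv.ker_comp]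

theorem resBy_of_pred
    (hzero : ∀ (M : Type u) [AddCommGroup M] [Module R M] [Subsingleton M], pred M)
    {M : Type u} [AddCommGroup M] [Module R M] (hM : pred M) (n : ℕ) : ResBy R pred n M := by
  induction n generalizing M with
  | zero => exact hM
  | succ n ih =>
    have : Subsingleton (LinearMap.ker (LinearMap.id : M →ₗ[R] M)) :=
      Submodule.subsingleton_iff_eq_bot.2 LinearMap.ker_id
    exact ⟨M, _, _, LinearMap.id, hM, Function.surjective_id, ih (hzero _)⟩

end Resolutions

section FPRes

variable {n : ℕ} {M N : Type u} [AddCommGroup M] [Module R M] [AddCommGroup N] [Module R N]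

theorem FPRes.of_linearEquiv (e : M ≃ₗ[R] N) (hM : FPRes R n M) : FPRes R n N :=
  resBy_of_linearEquiv (fun _ _ _ _ _ _ e ⟨_, _⟩ => ⟨.equiv e, .of_equiv e⟩) e hM

theorem FPRes.finite (hM : FPRes R n M) : Module.Finite R M := by
  cases n with
  | zero => exact hM.1
  | succ n =>
    obtain ⟨P, _, _, f, ⟨_, _⟩, hf, _⟩ := hM
    exact .of_surjective f hf

theorem FPRes.pdLE (hM : FPRes R n M) : pdLE R n M :=
  resBy_mono (fun _ _ _ h => h.2) hM

theorem fpRes_self (n : ℕ) : FPRes R n R :=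
  resBy_of_pred (fun _ _ _ _ => ⟨inferInstance, inferInstance⟩) ⟨inferInstance, inferInstance⟩ n

end FPRes

section ProjectiveDimension

open DirectSum

theorem pdLE_iff_hasProjectiveDimensionLE (n : ℕ) (M : Type u) [AddCommGroup M] [Module R M] :
    pdLE R n M ↔ HasProjectiveDimensionLE (ModuleCat.of R M) n := by
  induction n generalizing M with
  | zero =>
    rw [HasProjectiveDimensionLE, zero_add, ← projective_iff_hasProjectiveDimensionLT_one,
      ← IsProjective.iff_projective]
    rfl
  | succ n ih =>
    constructor
    · rintro ⟨P, _, _, f, hP, hf, hK⟩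
      have : Module.Projective R P := hP
      exact ((LinearMap.shortExact_shortComplexKer hf).hasProjectiveDimensionLT_X₃_iff n
        inferInstance).2 ((ih _).1 hK)
    · intro hM
      have hf := Finsupp.linearCombination_id_surjective R M
      exact ⟨M →₀ R, _, _, _, inferInstanceAs (Module.Projective R (M →₀ R)), hf,
        (ih _).2 (((LinearMap.shortExact_shortComplexKer hf).hasProjectiveDimensionLT_X₃_iff n
          inferInstance).1 hM)⟩

variable {n : ℕ} {M N : Type u} [AddCommGroup M] [Module R M] [AddCommGroup N] [Module R N]

theorem pdLE.of_linearEquiv (e : M ≃ₗ[R] N) (hM : pdLE R n M) : pdLE R n N :=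
  resBy_of_linearEquiv (fun _ _ _ _ _ _ e (_ : Module.Projective _ _) => .of_equiv e) e hM

theorem pdLE.of_retract (i : M →ₗ[R] N) (r : N →ₗ[R] M) (hri : r ∘ₗ i = LinearMap.id)
    (hN : pdLE R n N) : pdLE R n M := by
  have := (pdLE_iff_hasProjectiveDimensionLE n N).1 hN
  refine (pdLE_iff_hasProjectiveDimensionLE n M).2 ?_
  exact Retract.hasProjectiveDimensionLT
    ⟨ModuleCat.ofHom i, ModuleCat.ofHom r, ModuleCat.hom_ext hri⟩ _

variable {ι : Type u} {P Q : ι → Type u} [∀ i, AddCommGroup (P i)] [∀ i, Module R (P i)]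
  [∀ i, AddCommGroup (Q i)] [∀ i, Module R (Q i)]

noncomputable def DirectSum.lmapKerEquiv (f : ∀ i, P i →ₗ[R] Q i) :
    (⨁ i, LinearMap.ker (f i)) ≃ₗ[R] LinearMap.ker (lmap f) :=
  (LinearEquiv.ofInjective _ ((lmap_injective _).2 fun i =>
    (LinearMap.ker (f i)).injective_subtype)).trans
      (LinearEquiv.ofEq _ _ (by simp [range_lmap, ker_lmap]))

theorem pdLE_directSum (h : ∀ i, pdLE R n (P i)) : pdLE R n (⨁ i, P i) := by
  induction n generalizing P with
  | zero =>
    have : ∀ i, Module.Projective R (P i) := h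
    exact Module.Projective.directSum
  | succ n ih =>
    choose F _ _ f hF hf hK using h
    have : ∀ i, Module.Projective R (F i) := hF
    exact ⟨⨁ i, F i, _, _, lmap f, Module.Projective.directSum, (lmap_surjective f).2 hf,
      (ih hK).of_linearEquiv (lmapKerEquiv f)⟩

end ProjectiveDimension

section Precover

variable {n : ℕ} {T M : Type u} [AddCommGroup T] [Module R T] [AddCommGroup M] [Module R M]

variable (R) in
def IsFPResPrecover (n : ℕ) (g : T →ₗ[R] M) : Prop :=
  ∀ (N : Type u) [AddCommGroup N] [Module R N], FPRes R n N →
    Function.Surjective (fun h : N →ₗ[R] T => g ∘ₗ h)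

theorem IsFPResPrecover.surjective {g : T →ₗ[R] M} (hg : IsFPResPrecover R n g) :
    Function.Surjective g := by
  intro m
  obtain ⟨h, hh⟩ := hg R (fpRes_self n) (LinearMap.toSpanSingleton R M m)
  exact ⟨h 1, by simpa using LinearMap.congr_fun hh 1⟩

theorem IsFPResPrecover.nExactSES {g : T →ₗ[R] M} (hg : IsFPResPrecover R n g) :
    NExactSES R n (LinearMap.ker g).subtype g := by
  intro N _ _ hN
  refine ⟨fun _ _ => (LinearMap.cancel_left (LinearMap.ker g).injective_subtype).1,
    fun k => ⟨fun hk => ?_, ?_⟩, hg N hN⟩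
  · exact ⟨LinearMap.codRestrict _ k fun x => LinearMap.congr_fun hk x, rfl⟩
  · rintro ⟨h, rfl⟩
    ext x
    exact (h x).2

variable (R) in
theorem exists_isFPResPrecover (n : ℕ) (M : Type u) [AddCommGroup M] [Module R M] :
    ∃ (T : Type u) (_ : AddCommGroup T) (_ : Module R T) (g : T →ₗ[R] M),
      pdLE R n T ∧ IsFPResPrecover R n g := by
  classical
  -- modules in `𝒫^{<n+1}` are finitely generated, so the quotients of the `R^k` represent them all
  let ι := Σ (k : ℕ) (S : Submodule R (Fin k → R)),
    {h : ((Fin k → R) ⧸ S) →ₗ[R] M // FPRes R n ((Fin k → R) ⧸ S)}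
  let Q : ι → Type u := fun i => (Fin i.1 → R) ⧸ i.2.1
  refine ⟨DirectSum ι Q, _, _, DirectSum.toModule R ι M fun i => i.2.2.1,
    pdLE_directSum fun i => i.2.2.2.pdLE, fun N _ _ hN h => ?_⟩
  have := hN.finite
  obtain ⟨k, π, hπ⟩ := Module.Finite.exists_fin' R N
  let e := π.quotKerEquivOfSurjective hπ
  refine ⟨DirectSum.lof R ι Q ⟨k, _, h ∘ₗ e.toLinearMap, hN.of_linearEquiv e.symm⟩ ∘ₗ
    e.symm.toLinearMap, ?_⟩
  ext x
  rw [LinearMap.comp_apply, LinearMap.comp_apply, DirectSum.toModule_lof]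
  simp

end Precover

/-- If the `n`-exact and `(n+1)`-exact structures coincide, then every module in `𝒫^{<n+2}`
has projective dimension at most `n`. -/
theorem pd_le_of_nExact_eq_succExact (n : ℕ)
    (hEq : ∀ {A B C : Type u} [AddCommGroup A] [Module R A] [AddCommGroup B] [Module R B]
      [AddCommGroup C] [Module R C] (f : A →ₗ[R] B) (g : B →ₗ[R] C),
      Function.Injective f → Function.Surjective g → Function.Exact f g →
      (NExactSES R n f g ↔ NExactSES R (n+1) f g)) :
    ∀ (M : Type u) [AddCommGroup M] [Module R M], FPRes R (n+1) M → pdLE R n M := by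
  intro M _ _ hM
  obtain ⟨T, _, _, g, hT, hg⟩ := exists_isFPResPrecover R n M
  have hSucc : NExactSES R (n + 1) (LinearMap.ker g).subtype g :=
    (hEq _ g (LinearMap.ker g).injective_subtype hg.surjective
      (LinearMap.exact_subtype_ker_map g)).1 hg.nExactSES
  obtain ⟨s, hs⟩ := (hSucc M hM).2.2 LinearMap.id
  exact hT.of_retract s g hs
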